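/- Let t > 0, let r₀ ∈ ℝ³ with d = |r₀| > 0, and let B be the closed ball of radius R > 0 centered at the origin. Then ∫_B (4πt)^{−3/2}·exp(−|x − r₀|²/(4t)) dx = (1/2)·[erf((R−d)/(2√t)) + erf((R+d)/(2√t))] + (1/d)·√(t/π)·[exp(−(d+R)²/(4t)) − exp(−(d−R)²/(4t))]. -/

import Mathlib

open Real MeasureTheory intervalIntegral

/-- The error function `erf w = (2/√π) ∫₀ʷ exp(−u²) du`. -/
noncomputable def erf (w : ℝ) : ℝ := (2 / Real.sqrt π) * ∫ u in (0:ℝ)..w, Real.exp (-u^2)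

/-!
Rotate `r₀` onto the first axis and split the space orthogonally as `ℝ × ℝ²`, so that volume is
the product measure. The slice of the ball at height `z ∈ [-R, R]` is the disc of radius
`√(R² - z²)`, on which the Gaussian integrates in polar coordinates to
`4πt (1 - exp (-(R² - z²)/(4t)))`. After multiplying by `exp (-(z - d)²/(4t))` the remaining
integral over `[-R, R]` is a shifted Gaussian, which gives the `erf` terms, minus an exponential
of a linear function of `z`, which gives the `exp` terms.
-/

open Set Metric Module WithLp

lemma integral_exp_neg_sq_eq_sub_erf (a b : ℝ) :
    ∫ u in a..b, exp (-u ^ 2) = √π / 2 * (erf b - erf a) := by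
  have hint (x y : ℝ) : IntervalIntegrable (fun u => exp (-u ^ 2)) volume x y :=
    (by fun_prop : Continuous fun u : ℝ => exp (-u ^ 2)).intervalIntegrable x y
  rw [erf, erf, ← mul_sub, ← integral_interval_sub_left (hint 0 b) (hint 0 a)]
  field_simp

lemma erf_neg (w : ℝ) : erf (-w) = -erf w := by
  have h := integral_comp_neg (a := 0) (b := w) fun u => exp (-u ^ 2)
  simp only [neg_sq, neg_zero] at h
  rw [erf, erf, integral_symm (-w) 0, ← h, mul_neg]

lemma integral_exp_neg_sub_sq_div {t : ℝ} (ht : 0 < t) (c a b : ℝ) :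
    ∫ z in a..b, exp (-(z - c) ^ 2 / (4 * t)) =
      √(π * t) * (erf ((b - c) / (2 * √t)) - erf ((a - c) / (2 * √t))) := by
  have hsq (z : ℝ) : -(z - c) ^ 2 / (4 * t) = -((z - c) / (2 * √t)) ^ 2 := by
    rw [div_pow, mul_pow, sq_sqrt ht.le]; ring
  simp_rw [hsq]
  rw [integral_comp_sub_right (fun x => exp (-(x / (2 * √t)) ^ 2)),
    integral_comp_div (fun u => exp (-u ^ 2)) (by positivity), integral_exp_neg_sq_eq_sub_erf,
    smul_eq_mul, sqrt_mul pi_pos.le]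
  ring

lemma integral_exp_mul {c : ℝ} (hc : c ≠ 0) (a b : ℝ) :
    ∫ z in a..b, exp (c * z) = (exp (c * b) - exp (c * a)) / c := by
  rw [integral_comp_mul_left exp hc, integral_exp, smul_eq_mul, inv_mul_eq_div]

lemma integral_exp_neg_sub_sq_mul_one_sub_exp {t : ℝ} (ht : 0 < t) {d : ℝ} (hd : d ≠ 0)
    (R : ℝ) :
    ∫ z in (-R)..R, exp (-(z - d) ^ 2 / (4 * t)) * (1 - exp (-(R ^ 2 - z ^ 2) / (4 * t))) =
      √(π * t) * (erf ((R - d) / (2 * √t)) + erf ((R + d) / (2 * √t)))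
        + 2 * t / d * (exp (-(d + R) ^ 2 / (4 * t)) - exp (-(d - R) ^ 2 / (4 * t))) := by
  have hexp (z : ℝ) : exp (-(z - d) ^ 2 / (4 * t)) * exp (-(R ^ 2 - z ^ 2) / (4 * t)) =
      exp (-(R ^ 2 + d ^ 2) / (4 * t)) * exp (d / (2 * t) * z) := by
    rw [← exp_add, ← exp_add]; congr 1; field_simp; ring
  have hexp_right : exp (-(R ^ 2 + d ^ 2) / (4 * t)) * exp (d / (2 * t) * R) =
      exp (-(d - R) ^ 2 / (4 * t)) := by
    rw [← exp_add]; congr 1; field_simp; ring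
  have hexp_left : exp (-(R ^ 2 + d ^ 2) / (4 * t)) * exp (d / (2 * t) * -R) =
      exp (-(d + R) ^ 2 / (4 * t)) := by
    rw [← exp_add]; congr 1; field_simp; ring
  simp_rw [mul_sub, mul_one, hexp]
  rw [integral_sub
      ((by fun_prop : Continuous fun z => exp (-(z - d) ^ 2 / (4 * t))).intervalIntegrable _ _)
      ((by fun_prop : Continuous fun z =>
        exp (-(R ^ 2 + d ^ 2) / (4 * t)) * exp (d / (2 * t) * z)).intervalIntegrable _ _),
    intervalIntegral.integral_const_mul, integral_exp_neg_sub_sq_div ht,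
    integral_exp_mul (by positivity), mul_div_assoc', mul_sub (exp (-(R ^ 2 + d ^ 2) / (4 * t))),
    hexp_right, hexp_left, show (-R - d) / (2 * √t) = -((R + d) / (2 * √t)) by ring, erf_neg]
  field_simp
  ring

lemma integral_mul_exp_neg_sq_div {t : ℝ} (ht : t ≠ 0) (ρ : ℝ) :
    ∫ r in (0:ℝ)..ρ, r * exp (-r ^ 2 / (4 * t)) = 2 * t * (1 - exp (-ρ ^ 2 / (4 * t))) := by
  have hderiv (r : ℝ) : HasDerivAt (fun r => -(2 * t) * exp (-r ^ 2 / (4 * t)))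
      (r * exp (-r ^ 2 / (4 * t))) r := by
    refine ((((hasDerivAt_id r).pow 2).neg.div_const (4 * t)).exp.const_mul
      (-(2 * t))).congr_deriv ?_
    simp only [Pi.neg_apply, Pi.pow_apply, id]
    field_simp
    ring
  rw [integral_eq_sub_of_hasDerivAt (fun r _ => hderiv r) ((by fun_prop : Continuous
    fun r : ℝ => r * exp (-r ^ 2 / (4 * t))).intervalIntegrable _ _)]
  simp
  ring

lemma LinearIsometryEquiv.setIntegral_closedBall_comp {E E' : Type*} [NormedAddCommGroup E]
    [InnerProductSpace ℝ E] [FiniteDimensional ℝ E] [MeasurableSpace E] [BorelSpace E]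
    [NormedAddCommGroup E'] [InnerProductSpace ℝ E'] [FiniteDimensional ℝ E'] [MeasurableSpace E']
    [BorelSpace E'] (φ : E ≃ₗᵢ[ℝ] E') (f : E' → ℝ) (R : ℝ) :
    ∫ x in closedBall 0 R, f (φ x) = ∫ y in closedBall 0 R, f y := by
  rw [← φ.measurePreserving.setIntegral_preimage_emb φ.toHomeomorph.measurableEmbedding,
    φ.preimage_closedBall, map_zero]

section Slicing

variable {F : Type*} [NormedAddCommGroup F]

lemma toLp_mem_closedBall_iff (z : ℝ) (y : F) (R : ℝ) :
    toLp 2 (z, y) ∈ closedBall 0 R ↔ z ∈ Icc (-R) R ∧ y ∈ closedBall 0 √(R ^ 2 - z ^ 2) := by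
  simp only [mem_closedBall, dist_zero_right, prod_norm_eq_of_L2, toLp_fst, toLp_snd, mem_Icc,
    ← abs_le, Real.norm_eq_abs, sq_abs, sqrt_le_iff]
  constructor
  · rintro ⟨hR, h⟩
    have hz : z ^ 2 ≤ R ^ 2 := by nlinarith [norm_nonneg y]
    exact ⟨abs_le_of_sq_le_sq' hz hR |> abs_le.mpr,
      (le_sqrt (norm_nonneg y) (by linarith)).mpr (by linarith)⟩
  · rintro ⟨hz, hy⟩
    have hz2 : z ^ 2 ≤ R ^ 2 := sq_le_sq' (abs_le.mp hz).1 (abs_le.mp hz).2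
    rw [le_sqrt (norm_nonneg y) (by linarith)] at hy
    exact ⟨(abs_nonneg z).trans hz, by linarith⟩

lemma norm_toLp_sub_toLp_zero_sq (z d : ℝ) (y : F) :
    ‖toLp 2 (z, y) - toLp 2 (d, (0 : F))‖ ^ 2 = (z - d) ^ 2 + ‖y‖ ^ 2 := by
  rw [← toLp_sub, prod_norm_sq_eq_of_L2]
  simp

variable [InnerProductSpace ℝ F] [FiniteDimensional ℝ F]

lemma exists_linearIsometryEquiv_withLp_prod_apply_eq {E : Type*} [NormedAddCommGroup E]
    [InnerProductSpace ℝ E] [FiniteDimensional ℝ E] (h : finrank ℝ E = finrank ℝ F + 1) (u : E) :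
    ∃ φ : E ≃ₗᵢ[ℝ] WithLp 2 (ℝ × F), φ u = toLp 2 (‖u‖, 0) := by
  have hW : finrank ℝ E = finrank ℝ (WithLp 2 (ℝ × F)) := by
    rw [(WithLp.linearEquiv 2 ℝ (ℝ × F)).finrank_eq, Module.finrank_prod, finrank_self, h,
      add_comm]
  let ψ : E ≃ₗᵢ[ℝ] WithLp 2 (ℝ × F) := (stdOrthonormalBasis ℝ E).repr.trans
    ((stdOrthonormalBasis ℝ (WithLp 2 (ℝ × F))).reindex (finCongr hW.symm)).repr.symm
  have hnorm : ‖ψ u‖ = ‖toLp 2 (‖u‖, (0 : F))‖ := by simp [norm_toLp_fst]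
  exact ⟨ψ.trans (ℝ ∙ (ψ u - toLp 2 (‖u‖, 0)))ᗮ.reflection, Submodule.reflection_sub hnorm⟩

variable [MeasurableSpace F] [BorelSpace F]

lemma InnerProductSpace.volume_real_ball_zero_one_of_finrank_eq_two (hF : finrank ℝ F = 2) :
    volume.real (ball (0 : F) 1) = π := by
  have := nontrivial_of_finrank_eq_succ hF
  rw [measureReal_def, InnerProductSpace.volume_ball, hF]
  norm_num [Real.Gamma_two]
  exact Real.sq_sqrt Real.pi_pos.le

lemma setIntegral_closedBall_exp_neg_sq_norm_div (hF : finrank ℝ F = 2) {t : ℝ} (ht : t ≠ 0)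
    {ρ : ℝ} (hρ : 0 ≤ ρ) :
    ∫ y in closedBall (0 : F) ρ, exp (-‖y‖ ^ 2 / (4 * t)) =
      4 * π * t * (1 - exp (-ρ ^ 2 / (4 * t))) := by
  have := nontrivial_of_finrank_eq_succ hF
  have hind : (closedBall (0 : F) ρ).indicator (fun y => exp (-‖y‖ ^ 2 / (4 * t))) =
      fun y => (Iic ρ).indicator (fun r => exp (-r ^ 2 / (4 * t))) ‖y‖ := by
    ext y
    simp only [indicator, mem_closedBall, dist_zero_right, mem_Iic]
  rw [← MeasureTheory.integral_indicator measurableSet_closedBall, hind,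
    integral_fun_norm_addHaar, hF, InnerProductSpace.volume_real_ball_zero_one_of_finrank_eq_two hF]
  simp_rw [← indicator_smul]
  rw [setIntegral_indicator measurableSet_Iic, Ioi_inter_Iic, ← integral_of_le hρ]
  simp only [Nat.add_one_sub_one, pow_one, smul_eq_mul, integral_mul_exp_neg_sq_div ht]
  ring

lemma integral_withLp_prod_eq_integral_integral {G : WithLp 2 (ℝ × F) → ℝ}
    (hG : Integrable G) :
    ∫ w, G w = ∫ z, ∫ y, G (toLp 2 (z, y)) := by
  have hmp := WithLp.volume_preserving_toLp ℝ F
  have hemb := (MeasurableEquiv.toLp 2 (ℝ × F)).measurableEmbedding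
  rw [← hmp.integral_comp hemb G]
  exact integral_prod _ ((hmp.integrable_comp_emb hemb).mpr hG)

lemma integral_indicator_closedBall_exp_neg_norm_sub_sq_div_toLp (hF : finrank ℝ F = 2) {t : ℝ}
    (ht : t ≠ 0) (d R z : ℝ) :
    ∫ y : F, (closedBall (0 : WithLp 2 (ℝ × F)) R).indicator
        (fun w => exp (-‖w - toLp 2 (d, 0)‖ ^ 2 / (4 * t))) (toLp 2 (z, y)) =
      (Icc (-R) R).indicator (fun z => 4 * π * t *
        (exp (-(z - d) ^ 2 / (4 * t)) * (1 - exp (-(R ^ 2 - z ^ 2) / (4 * t))))) z := by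
  by_cases hz : z ∈ Icc (-R) R
  · have hslice (y : F) : (closedBall 0 R).indicator
        (fun w => exp (-‖w - toLp 2 (d, 0)‖ ^ 2 / (4 * t))) (toLp 2 (z, y)) =
        exp (-(z - d) ^ 2 / (4 * t)) *
          (closedBall 0 √(R ^ 2 - z ^ 2)).indicator (fun y => exp (-‖y‖ ^ 2 / (4 * t))) y := by
      by_cases hy : y ∈ closedBall 0 √(R ^ 2 - z ^ 2)
      · rw [indicator_of_mem ((toLp_mem_closedBall_iff z y R).mpr ⟨hz, hy⟩),
          indicator_of_mem hy, norm_toLp_sub_toLp_zero_sq, ← exp_add]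
        ring_nf
      · rw [indicator_of_notMem (hy <| (toLp_mem_closedBall_iff z y R).mp · |>.2),
          indicator_of_notMem hy, mul_zero]
    have hz2 : 0 ≤ R ^ 2 - z ^ 2 := by
      nlinarith [hz.1, hz.2]
    rw [indicator_of_mem hz, integral_congr_ae (.of_forall hslice),
      MeasureTheory.integral_const_mul,
      MeasureTheory.integral_indicator measurableSet_closedBall,
      setIntegral_closedBall_exp_neg_sq_norm_div hF ht (sqrt_nonneg _), sq_sqrt hz2]
    ring
  · have hslice (y : F) : (closedBall 0 R).indicator
        (fun w => exp (-‖w - toLp 2 (d, 0)‖ ^ 2 / (4 * t))) (toLp 2 (z, y)) = 0 :=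
      indicator_of_notMem (fun h => hz ((toLp_mem_closedBall_iff z y R).mp h).1) _
    simp only [hslice, MeasureTheory.integral_zero, indicator_of_notMem hz]

lemma setIntegral_closedBall_exp_neg_norm_sub_sq_div (hF : finrank ℝ F = 2) {t : ℝ} (ht : 0 < t)
    {d : ℝ} (hd : d ≠ 0) {R : ℝ} (hR : 0 ≤ R) :
    ∫ w in closedBall (0 : WithLp 2 (ℝ × F)) R, exp (-‖w - toLp 2 (d, 0)‖ ^ 2 / (4 * t)) =
      4 * π * t * (√(π * t) * (erf ((R - d) / (2 * √t)) + erf ((R + d) / (2 * √t)))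
        + 2 * t / d * (exp (-(d + R) ^ 2 / (4 * t)) - exp (-(d - R) ^ 2 / (4 * t)))) := by
  have hint : Integrable ((closedBall (0 : WithLp 2 (ℝ × F)) R).indicator
      fun w => exp (-‖w - toLp 2 (d, 0)‖ ^ 2 / (4 * t))) :=
    ((by fun_prop : Continuous fun w : WithLp 2 (ℝ × F) =>
        exp (-‖w - toLp 2 (d, 0)‖ ^ 2 / (4 * t))).continuousOn.integrableOn_compact
      (isCompact_closedBall 0 R)).integrable_indicator measurableSet_closedBall
  rw [← MeasureTheory.integral_indicator measurableSet_closedBall,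
    integral_withLp_prod_eq_integral_integral hint]
  simp_rw [integral_indicator_closedBall_exp_neg_norm_sub_sq_div_toLp hF ht.ne']
  rw [MeasureTheory.integral_indicator measurableSet_Icc, integral_Icc_eq_integral_Ioc,
    ← integral_of_le (by linarith), intervalIntegral.integral_const_mul,
    integral_exp_neg_sub_sq_mul_one_sub_exp ht hd]

end Slicing

lemma rpow_neg_three_halves_mul_self {a : ℝ} (ha : 0 < a) :
    a ^ (-(3 : ℝ) / 2) * a = (√a)⁻¹ := by
  rw [sqrt_eq_rpow, ← rpow_neg ha.le, ← rpow_add_one ha.ne']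
  norm_num

theorem setIntegral_closedBall_heatKernel_of_finrank_eq_three {E : Type*} [NormedAddCommGroup E]
    [InnerProductSpace ℝ E] [FiniteDimensional ℝ E] [MeasurableSpace E] [BorelSpace E]
    (hE : finrank ℝ E = 3) {t : ℝ} (ht : 0 < t) {u : E} (hu : u ≠ 0) {R : ℝ} (hR : 0 ≤ R) :
    ∫ x in closedBall 0 R, (4 * π * t) ^ (-(3:ℝ)/2) * exp (-‖x - u‖ ^ 2 / (4 * t)) =
      (1/2) * (erf ((R - ‖u‖) / (2 * √t)) + erf ((R + ‖u‖) / (2 * √t)))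
        + (1 / ‖u‖) * √(t / π) *
          (exp (-(‖u‖ + R) ^ 2 / (4 * t)) - exp (-(‖u‖ - R) ^ 2 / (4 * t))) := by
  obtain ⟨φ, hφ⟩ := exists_linearIsometryEquiv_withLp_prod_apply_eq
    (F := EuclideanSpace ℝ (Fin 2)) (by simp [hE]) u
  have hcenter : ∫ x in closedBall 0 R, exp (-‖x - u‖ ^ 2 / (4 * t)) =
      ∫ w in closedBall (0 : WithLp 2 (ℝ × EuclideanSpace ℝ (Fin 2))) R,
        exp (-‖w - toLp 2 (‖u‖, 0)‖ ^ 2 / (4 * t)) := by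
    simp_rw [← φ.setIntegral_closedBall_comp, ← hφ, ← map_sub, LinearIsometryEquiv.norm_map]
  have hsqrt : √(4 * π * t) = 2 * (√π * √t) := by
    rw [mul_assoc, sqrt_mul (by norm_num), sqrt_mul pi_pos.le,
      show (4 : ℝ) = 2 ^ 2 by norm_num, sqrt_sq zero_le_two]
  have hprefactor (A X : ℝ) : (2 * (√π * √t))⁻¹ * (√π * √t * A + 2 * t / ‖u‖ * X) =
      1 / 2 * A + 1 / ‖u‖ * (√t / √π) * X := by
    have : 0 < √t := sqrt_pos.mpr ht
    have : 0 < √π := sqrt_pos.mpr pi_pos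
    have : 0 < ‖u‖ := norm_pos_iff.mpr hu
    field_simp
    linear_combination -2 * X * sq_sqrt ht.le
  rw [MeasureTheory.integral_const_mul, hcenter, setIntegral_closedBall_exp_neg_norm_sub_sq_div
    finrank_euclideanSpace_fin ht (norm_ne_zero_iff.mpr hu) hR, ← mul_assoc,
    rpow_neg_three_halves_mul_self (by positivity), hsqrt, sqrt_mul pi_pos.le, sqrt_div ht.le,
    hprefactor]

theorem heatKernel_integral_ball (t : ℝ) (ht : 0 < t) (r₀ : EuclideanSpace ℝ (Fin 3))
    (d : ℝ) (hd : d = ‖r₀‖) (hd0 : 0 < d) (R : ℝ) (hR : 0 < R) :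
    (∫ x in Metric.closedBall (0 : EuclideanSpace ℝ (Fin 3)) R,
        (4 * π * t) ^ (-(3:ℝ)/2) * Real.exp (-‖x - r₀‖^2 / (4 * t))) =
    (1/2) * (erf ((R - d) / (2 * Real.sqrt t)) + erf ((R + d) / (2 * Real.sqrt t)))
      + (1 / d) * Real.sqrt (t / π) *
        (Real.exp (-(d + R)^2 / (4 * t)) - Real.exp (-(d - R)^2 / (4 * t))) := by
  subst hd
  exact setIntegral_closedBall_heatKernel_of_finrank_eq_three finrank_euclideanSpace_fin ht
    (norm_pos_iff.mp hd0) hR.le
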